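/- arXiv:1704.01378 — 3 statements merged into one kernel-verified Lean document; each statement's English description precedes it below -/
import Mathlib

section
/- Define a morphism F : G → H in the category Grpd of (small) groupoids to be a weak equivalence if it is fully faithful and essentially surjective, a fibration if for each object x in G and each morphism h : F(x) → y in H there exists a morphism g : x → x' in G with F(g) = h (isofibration), and a cofibration if it is injective on objects. Then Grpd with these three classes of morphisms is a model category. -/
/-!
Weak equivalences are exactly the equivalences of categories, so two-out-of-three is inherited
from equivalences, and `Grpd` is complete and cocomplete as a reflective subcategory of `Cat`.
The factorizations go through the mapping cylinder and the mapping path groupoid, both induced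
categories. For the lifting axioms, a lift up to natural isomorphism is built from a quasi-inverse
of whichever side is an equivalence; it is then made strict by moving each object along an
isomorphism lifted through the isofibration, leaving the image of the cofibration untouched,
which is possible because the cofibration is injective on objects.
-/

open CategoryTheory

universe u

namespace Stmt0

/-- Weak equivalences in `Grpd`: fully faithful and essentially surjective functors. -/
def weakEquiv : MorphismProperty Grpd.{u, u} :=
  fun _ _ F => Functor.Full F ∧ Functor.Faithful F ∧ Functor.EssSurj F

/-- Fibrations in `Grpd` (isofibrations): for each object `x` of the source and each
morphism `h : F(x) ⟶ y` in the target, there is a morphism `g : x ⟶ x'` with `F(g) = h`. -/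
def fibration : MorphismProperty Grpd.{u, u} :=
  fun G H F => ∀ (x : G) (y : H) (h : F.obj x ⟶ y),
    ∃ (x' : G) (g : x ⟶ x') (e : F.obj x' = y), F.map g ≫ eqToHom e = h

/-- Cofibrations in `Grpd`: functors injective on objects. -/
def cofibration : MorphismProperty Grpd.{u, u} :=
  fun _ _ F => Function.Injective F.obj

/-- `f` is a retract of `f'` in the arrow category. -/
def IsRetract {C : Type*} [Category C] {X Y X' Y' : C} (f : X ⟶ Y) (f' : X' ⟶ Y') : Prop :=
  ∃ (i : X ⟶ X') (r : X' ⟶ X) (j : Y ⟶ Y') (s : Y' ⟶ Y),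
    i ≫ r = 𝟙 X ∧ j ≫ s = 𝟙 Y ∧ i ≫ f' = f ≫ j ∧ f' ≫ s = r ≫ f

/-- The axioms of a model category for a triple of classes of morphisms
(weak equivalences `W`, fibrations `Fib`, cofibrations `Cof`). -/
structure IsModelCategory (C : Type*) [Category C]
    (W Fib Cof : MorphismProperty C) : Prop where
  /-- completeness -/
  hasLimits : Limits.HasLimits C
  /-- cocompleteness -/
  hasColimits : Limits.HasColimits C
  /-- two-out-of-three -/
  weq_comp : ∀ ⦃X Y Z : C⦄ (f : X ⟶ Y) (g : Y ⟶ Z), W f → W g → W (f ≫ g)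
  weq_of_precomp : ∀ ⦃X Y Z : C⦄ (f : X ⟶ Y) (g : Y ⟶ Z), W f → W (f ≫ g) → W g
  weq_of_postcomp : ∀ ⦃X Y Z : C⦄ (f : X ⟶ Y) (g : Y ⟶ Z), W g → W (f ≫ g) → W f
  /-- closure under retracts -/
  weq_retract : ∀ ⦃X Y X' Y' : C⦄ (f : X ⟶ Y) (f' : X' ⟶ Y'),
    IsRetract f f' → W f' → W f
  fib_retract : ∀ ⦃X Y X' Y' : C⦄ (f : X ⟶ Y) (f' : X' ⟶ Y'),
    IsRetract f f' → Fib f' → Fib f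
  cof_retract : ∀ ⦃X Y X' Y' : C⦄ (f : X ⟶ Y) (f' : X' ⟶ Y'),
    IsRetract f f' → Cof f' → Cof f
  /-- lifting axioms -/
  lift_cof_trivFib : ∀ ⦃A B X Y : C⦄ (i : A ⟶ B) (p : X ⟶ Y),
    Cof i → Fib p → W p → HasLiftingProperty i p
  lift_trivCof_fib : ∀ ⦃A B X Y : C⦄ (i : A ⟶ B) (p : X ⟶ Y),
    Cof i → W i → Fib p → HasLiftingProperty i p
  /-- factorization axioms -/
  fact_cof_trivFib : ∀ ⦃X Y : C⦄ (f : X ⟶ Y),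
    ∃ (Z : C) (i : X ⟶ Z) (p : Z ⟶ Y), Cof i ∧ Fib p ∧ W p ∧ i ≫ p = f
  fact_trivCof_fib : ∀ ⦃X Y : C⦄ (f : X ⟶ Y),
    ∃ (Z : C) (i : X ⟶ Z) (p : Z ⟶ Y), Cof i ∧ W i ∧ Fib p ∧ i ≫ p = f

section Retract

variable {X Y X' Y' : Type*} [Category X] [Category Y] [Category X'] [Category Y']
  {f : X ⥤ Y} {f' : X' ⥤ Y'} {i : X ⥤ X'} {r : X' ⥤ X} {j : Y ⥤ Y'} {s : Y' ⥤ Y}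

theorem injective_obj_of_retract (hir : i ⋙ r = 𝟭 X) (hi : i ⋙ f' = f ⋙ j)
    (hf' : Function.Injective f'.obj) : Function.Injective f.obj := by
  have hi_inj : Function.Injective i.obj :=
    Function.LeftInverse.injective (g := r.obj) (Functor.congr_obj hir)
  have : Function.Injective (f ⋙ j).obj := hi ▸ hf'.comp hi_inj
  exact Function.Injective.of_comp this

theorem faithful_of_retract (hir : i ⋙ r = 𝟭 X) (hi : i ⋙ f' = f ⋙ j) [f'.Faithful] :
    f.Faithful := by
  have : (i ⋙ r).Faithful := hir ▸ inferInstance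
  have : i.Faithful := Functor.Faithful.of_comp i r
  have : (f ⋙ j).Faithful := hi ▸ inferInstance
  exact Functor.Faithful.of_comp f j

theorem full_of_retract (hir : i ⋙ r = 𝟭 X) (hjs : j ⋙ s = 𝟭 Y) (hi : i ⋙ f' = f ⋙ j)
    (hr : f' ⋙ s = r ⋙ f) [f'.Full] : f.Full where
  map_surjective {a b} u := by
    obtain ⟨w, hw⟩ := f'.map_surjective
      (eqToHom (Functor.congr_obj hi a) ≫ j.map u ≫ eqToHom (Functor.congr_obj hi b).symm)
    refine ⟨eqToHom (Functor.congr_obj hir a).symm ≫ r.map w ≫ eqToHom (Functor.congr_obj hir b),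
      ?_⟩
    have hrw := Functor.congr_hom hr.symm w
    have hju := Functor.congr_hom hjs u
    simp only [Functor.comp_map, Functor.id_map] at hrw hju
    simp [hrw, hw, hju, eqToHom_map]

theorem essSurj_of_retract (hjs : j ⋙ s = 𝟭 Y) (hr : f' ⋙ s = r ⋙ f) [f'.EssSurj] :
    f.EssSurj where
  mem_essImage y := ⟨r.obj (f'.objPreimage (j.obj y)),
    ⟨eqToIso (Functor.congr_obj hr _).symm ≪≫ s.mapIso (f'.objObjPreimageIso _) ≪≫
      eqToIso (Functor.congr_obj hjs y)⟩⟩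

end Retract

section Lifting

variable {A B X Y : Type*} [Category A] [Category B] [Category X] [Category Y]

structure IsoLift (p : X ⥤ Y) {x : X} {y : Y} (h : p.obj x ⟶ y) where
  obj : X
  iso : x ≅ obj
  obj_eq : p.obj obj = y
  map_iso : p.map iso.hom ≫ eqToHom obj_eq = h

theorem IsoLift.map_inv_comp {p : X ⥤ Y} {x : X} {y : Y} {h : p.obj x ⟶ y} (L : IsoLift p h) :
    p.map L.iso.inv ≫ h = eqToHom L.obj_eq := by
  rw [← cancel_epi (p.map L.iso.hom), ← p.map_comp_assoc, Iso.hom_inv_id, p.map_id,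
    Category.id_comp, L.map_iso]

def IsIsofibration (p : X ⥤ Y) : Prop :=
  ∀ (x : X) (y : Y) (h : p.obj x ≅ y), Nonempty (IsoLift p h.hom)

variable {i : A ⥤ B} {p : X ⥤ Y} {f : A ⥤ X} {g : B ⥤ Y}

theorem exists_strict_lift (hi : Function.Injective i.obj) (hp : IsIsofibration p)
    (w : f ⋙ p = i ⋙ g) (F : B ⥤ X) (α : F ⋙ p ≅ g) (β : i ⋙ F ≅ f)
    (hαβ : ∀ a, p.map (β.hom.app a) ≫ eqToHom (Functor.congr_obj w a) = α.hom.app (i.obj a)) :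
    ∃ l : B ⥤ X, i ⋙ l = f ∧ l ⋙ p = g := by
  classical
  let canon (a : A) : IsoLift p (α.hom.app (i.obj a)) :=
    ⟨f.obj a, β.app a, Functor.congr_obj w a, hαβ a⟩
  let L (b : B) : IsoLift p (α.hom.app b) :=
    if h : ∃ a, i.obj a = b then h.choose_spec ▸ canon h.choose
    else (hp _ _ (α.app b)).some
  have hL (a : A) : L (i.obj a) = canon a := by
    have canon_transport : ∀ a' (e : i.obj a' = i.obj a), e ▸ canon a' = canon a := by
      rintro a' e
      obtain rfl := hi e
      rfl
    have h : ∃ a', i.obj a' = i.obj a := ⟨a, rfl⟩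
    simp only [L, dif_pos h]
    exact canon_transport _ _
  let l := F.copyObj (fun b => (L b).obj) (fun b => (L b).iso)
  refine ⟨l, ?_, ?_⟩
  · refine Functor.ext_of_iso (Functor.isoWhiskerLeft i (F.isoCopyObj _ _).symm ≪≫ β)
      (fun a => congrArg IsoLift.obj (hL a)) (fun a => ?_)
    have iso_inv_comp : ∀ M (hM : M = canon a),
        M.iso.inv ≫ β.hom.app a = eqToHom (congrArg IsoLift.obj hM) := by
      rintro M rfl
      simp [canon]
    exact iso_inv_comp _ (hL a)
  · refine Functor.ext_of_iso (Functor.isoWhiskerRight (F.isoCopyObj _ _).symm p ≪≫ α)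
      (fun b => (L b).obj_eq) (fun b => ?_)
    exact (L b).map_inv_comp

theorem exists_lift_of_isEquivalence_right [p.IsEquivalence] (hi : Function.Injective i.obj)
    (hp : IsIsofibration p) (w : f ⋙ p = i ⋙ g) : ∃ l : B ⥤ X, i ⋙ l = f ∧ l ⋙ p = g := by
  obtain ⟨E, rfl⟩ : ∃ E : X ≌ Y, E.functor = p := ⟨p.asEquivalence, rfl⟩
  have hw {a a' : A} (u : a ⟶ a') : g.map (i.map u) =
      eqToHom (Functor.congr_obj w a).symm ≫ E.functor.map (f.map u) ≫
        eqToHom (Functor.congr_obj w a') := by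
    simpa using Functor.congr_hom w.symm u
  refine exists_strict_lift hi hp w (g ⋙ E.inverse)
    (NatIso.ofComponents (fun b => E.counitIso.app (g.obj b)))
    (NatIso.ofComponents
      (fun a => E.inverse.mapIso (eqToIso (Functor.congr_obj w a).symm) ≪≫
        E.unitIso.symm.app (f.obj a)) (by simp [hw, eqToHom_map])) (fun a => ?_)
  simp only [Functor.comp_obj, NatIso.ofComponents_hom_app, Iso.trans_hom, Functor.mapIso_hom,
    eqToIso.hom, Iso.app_hom, Iso.symm_hom, Functor.map_comp, eqToHom_map]
  have e : E.functor.obj (f.obj a) = g.obj (i.obj a) := Functor.congr_obj w a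
  rw [← E.counit_app_functor, Category.assoc, eqToHom_naturality (fun y => E.counit.app y) e]
  simp

theorem exists_lift_of_isEquivalence_left [i.IsEquivalence] (hi : Function.Injective i.obj)
    (hp : IsIsofibration p) (w : f ⋙ p = i ⋙ g) : ∃ l : B ⥤ X, i ⋙ l = f ∧ l ⋙ p = g := by
  obtain ⟨E, rfl⟩ : ∃ E : A ≌ B, E.functor = i := ⟨i.asEquivalence, rfl⟩
  have hw {a a' : A} (u : a ⟶ a') : p.map (f.map u) =
      eqToHom (Functor.congr_obj w a) ≫ g.map (E.functor.map u) ≫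
        eqToHom (Functor.congr_obj w a').symm := by
    simpa using Functor.congr_hom w u
  refine exists_strict_lift hi hp w (E.inverse ⋙ f)
    (NatIso.ofComponents
      (fun b => eqToIso (Functor.congr_obj w (E.inverse.obj b)) ≪≫ g.mapIso (E.counitIso.app b))
      (by simp [hw]))
    (NatIso.ofComponents (fun a => f.mapIso (E.unitIso.symm.app a)) (by simp)) (fun a => ?_)
  simp [hw, E.counit_app_functor]

end Lifting

section Grpd

variable {G H : Grpd.{u, u}}

theorem weakEquiv_iff_isEquivalence (F : G ⟶ H) : weakEquiv F ↔ F.IsEquivalence :=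
  ⟨fun ⟨hfull, hfaith, hsurj⟩ => ⟨hfaith, hfull, hsurj⟩,
    fun _ => ⟨inferInstance, inferInstance, inferInstance⟩⟩

theorem weakEquiv_comp {K : Grpd.{u, u}} (F : G ⟶ H) (F' : H ⟶ K) (hF : weakEquiv F)
    (hF' : weakEquiv F') : weakEquiv (F ≫ F') := by
  rw [weakEquiv_iff_isEquivalence] at *
  exact Functor.isEquivalence_trans F F'

theorem weakEquiv_of_weakEquiv_comp_left {K : Grpd.{u, u}} (F : G ⟶ H) (F' : H ⟶ K)
    (hF : weakEquiv F) (hFF' : weakEquiv (F ≫ F')) : weakEquiv F' := by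
  rw [weakEquiv_iff_isEquivalence] at *
  have : (F ⋙ F').IsEquivalence := hFF'
  exact Functor.isEquivalence_of_comp_left F F'

theorem weakEquiv_of_weakEquiv_comp_right {K : Grpd.{u, u}} (F : G ⟶ H) (F' : H ⟶ K)
    (hF' : weakEquiv F') (hFF' : weakEquiv (F ≫ F')) : weakEquiv F := by
  rw [weakEquiv_iff_isEquivalence] at *
  have : (F ⋙ F').IsEquivalence := hFF'
  exact Functor.isEquivalence_of_comp_right F F'

variable {G' H' : Grpd.{u, u}} {F : G ⟶ H} {F' : G' ⟶ H'}

theorem weakEquiv_of_isRetract (hF : IsRetract F F') (hF' : weakEquiv F') : weakEquiv F := by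
  obtain ⟨i, r, j, s, hir, hjs, hi, hr⟩ := hF
  obtain ⟨_, _, _⟩ := hF'
  exact ⟨full_of_retract hir hjs hi hr, faithful_of_retract hir hi, essSurj_of_retract hjs hr⟩

theorem cofibration_of_isRetract (hF : IsRetract F F') (hF' : cofibration F') :
    cofibration F := by
  obtain ⟨i, r, j, s, hir, -, hi, -⟩ := hF
  exact injective_obj_of_retract hir hi hF'

theorem fibration_of_isRetract (hF : IsRetract F F') (hF' : fibration F') : fibration F := by
  obtain ⟨i, r, j, s, hir, hjs, hi, hr⟩ := hF
  intro x y h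
  obtain ⟨x', g, e, hg⟩ := hF' (i.obj x) (j.obj y) (eqToHom (Functor.congr_obj hi x) ≫ j.map h)
  refine ⟨r.obj x', eqToHom (Functor.congr_obj hir x).symm ≫ r.map g,
    (Functor.congr_obj hr x').symm.trans ((congrArg s.obj e).trans (Functor.congr_obj hjs y)), ?_⟩
  have hg' : F'.map g = eqToHom (Functor.congr_obj hi x) ≫ j.map h ≫ eqToHom e.symm := by
    rw [← Category.assoc, ← hg]; simp
  have hrg := Functor.congr_hom hr.symm g
  have hjh := Functor.congr_hom hjs h
  simp only [Grpd.comp_eq_comp, Grpd.id_eq_id, Functor.comp_map, Functor.id_map] at hrg hjh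
  simp [hrg, hg', hjh, eqToHom_map]

end Grpd

section Factorization

variable {G H : Grpd.{u, u}} (F : G ⟶ H)

/-- The mapping cylinder of `F`: objects of `G ⊕ H`, morphisms those of `H` between their images. -/
def mapCyl : Grpd.{u, u} := Grpd.of (InducedCategory H (Sum.elim F.obj id))

def mapCylIncl : G ⟶ mapCyl F where
  obj := Sum.inl
  map g := InducedCategory.homMk (F.map g)

def mapCylProj : mapCyl F ⟶ H := inducedFunctor (Sum.elim F.obj id)

theorem mapCylIncl_comp_mapCylProj : mapCylIncl F ≫ mapCylProj F = F := rfl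

theorem cofibration_mapCylIncl : cofibration (mapCylIncl F) := Sum.inl_injective

theorem fibration_mapCylProj : fibration (mapCylProj F) :=
  fun _ y h => ⟨Sum.inr y, InducedCategory.homMk h, rfl, Category.comp_id h⟩

theorem weakEquiv_mapCylProj : weakEquiv (mapCylProj F) :=
  ⟨InducedCategory.full _, InducedCategory.faithful _,
    ⟨fun y => ⟨Sum.inr y, ⟨Iso.refl y⟩⟩⟩⟩

structure MapPathObj where
  src : G
  tgt : H
  iso : F.obj src ≅ tgt

/-- The mapping path space of `F`: triples `(x, y, F x ≅ y)`, with the morphisms of `G` between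
the first components. -/
def mapPath : Grpd.{u, u} := Grpd.of (InducedCategory G (MapPathObj.src (F := F)))

def mapPathIncl : G ⟶ mapPath F where
  obj x := ⟨x, F.obj x, Iso.refl _⟩
  map g := InducedCategory.homMk g

def mapPathProj : mapPath F ⟶ H :=
  (inducedFunctor MapPathObj.src ⋙ F).copyObj MapPathObj.tgt MapPathObj.iso

theorem mapPathIncl_comp_mapPathProj : mapPathIncl F ≫ mapPathProj F = F :=
  CategoryTheory.Functor.hext (fun _ => rfl) fun x x' g => heq_of_eq <| by
    change (Iso.refl (F.obj x)).inv ≫ F.map g ≫ (Iso.refl (F.obj x')).hom = F.map g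
    simp

theorem cofibration_mapPathIncl : cofibration (mapPathIncl F) :=
  fun _ _ h => congrArg MapPathObj.src h

theorem weakEquiv_mapPathIncl : weakEquiv (mapPathIncl F) :=
  ⟨⟨fun g => ⟨g.hom, rfl⟩⟩, ⟨fun h => congrArg InducedCategory.Hom.hom h⟩,
    ⟨fun a => ⟨a.src, ⟨InducedCategory.isoMk (Iso.refl a.src)⟩⟩⟩⟩

theorem fibration_mapPathProj : fibration (mapPathProj F) := by
  intro a y h
  refine ⟨⟨a.src, y, a.iso ≪≫ (Groupoid.isoEquivHom _ _).symm h⟩, InducedCategory.homMk (𝟙 a.src),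
    rfl, ?_⟩
  change (a.iso.inv ≫ F.map (𝟙 a.src) ≫ a.iso.hom ≫ h) ≫ eqToHom rfl = h
  rw [eqToHom_refl, Category.comp_id, CategoryTheory.Functor.map_id, Category.id_comp]
  exact a.iso.inv_hom_id_assoc h

end Factorization

section GrpdLifting

variable {A B X Y : Grpd.{u, u}} {i : A ⟶ B} {p : X ⟶ Y}

theorem isIsofibration_of_fibration (hp : fibration p) : IsIsofibration p := fun x y h =>
  let ⟨x', g, e, hg⟩ := hp x y h.hom
  ⟨⟨x', (Groupoid.isoEquivHom _ _).symm g, e, hg⟩⟩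

theorem hasLiftingProperty_of_trivialFibration (hi : cofibration i) (hp : fibration p)
    (hpw : weakEquiv p) : HasLiftingProperty i p := by
  rw [weakEquiv_iff_isEquivalence] at hpw
  refine ⟨fun sq => ?_⟩
  obtain ⟨l, hil, hlp⟩ :=
    exists_lift_of_isEquivalence_right hi (isIsofibration_of_fibration hp) sq.w
  exact ⟨⟨⟨l, hil, hlp⟩⟩⟩

theorem hasLiftingProperty_of_trivialCofibration (hi : cofibration i) (hiw : weakEquiv i)
    (hp : fibration p) : HasLiftingProperty i p := by
  rw [weakEquiv_iff_isEquivalence] at hiw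
  refine ⟨fun sq => ?_⟩
  obtain ⟨l, hil, hlp⟩ :=
    exists_lift_of_isEquivalence_left hi (isIsofibration_of_fibration hp) sq.w
  exact ⟨⟨⟨l, hil, hlp⟩⟩⟩

end GrpdLifting

/-- **The canonical model structure on `Grpd`**: with weak equivalences the fully faithful
essentially surjective functors, fibrations the isofibrations, and cofibrations the functors
injective on objects, the category of small groupoids is a model category. -/
theorem grpd_isModelCategory :
    IsModelCategory Grpd.{u, u} weakEquiv fibration cofibration :=
  { hasLimits := hasLimits_of_reflective Grpd.forgetToCat
    hasColimits := hasColimits_of_reflective Grpd.forgetToCat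
    weq_comp _ _ _ := weakEquiv_comp
    weq_of_precomp _ _ _ := weakEquiv_of_weakEquiv_comp_left
    weq_of_postcomp _ _ _ := weakEquiv_of_weakEquiv_comp_right
    weq_retract _ _ _ _ _ _ := weakEquiv_of_isRetract
    fib_retract _ _ _ _ _ _ := fibration_of_isRetract
    cof_retract _ _ _ _ _ _ := cofibration_of_isRetract
    lift_cof_trivFib _ _ _ _ _ _ := hasLiftingProperty_of_trivialFibration
    lift_trivCof_fib _ _ _ _ _ _ := hasLiftingProperty_of_trivialCofibration
    fact_cof_trivFib _ _ F := ⟨mapCyl F, mapCylIncl F, mapCylProj F, cofibration_mapCylIncl F,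
      fibration_mapCylProj F, weakEquiv_mapCylProj F, mapCylIncl_comp_mapCylProj F⟩
    fact_trivCof_fib _ _ F := ⟨mapPath F, mapPathIncl F, mapPathProj F, cofibration_mapPathIncl F,
      weakEquiv_mapPathIncl F, fibration_mapPathProj F, mapPathIncl_comp_mapPathProj F⟩ }

end Stmt0
end

section
/- In the model structure on Grpd (weak equivalences = equivalences of categories, cofibrations = functors injective on objects, fibrations = isofibrations), every object is cofibrant, and the pushout product of two cofibrations F : G → H and F′ : G′ → H′, namely the induced functor (H × G′) ⊔_{G × G′} (G × H′) → H × H′, is again a cofibration. -/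
/-!
STATEMENT 3: In the canonical model structure on `Grpd` (cofibrations = functors
injective on objects) every object is cofibrant, and the pushout product of two
cofibrations `F : G ⟶ H`, `F′ : G′ ⟶ H′`, i.e. the induced functor
`(H × G′) ⊔_{G × G′} (G × H′) ⟶ H × H′`, is again a cofibration.
-/

open CategoryTheory

universe u

namespace Stmt3

/-- Regard a functor between groupoids as a morphism in `Grpd`. -/
def homOf {C D : Type u} [Groupoid.{u} C] [Groupoid.{u} D] (F : C ⥤ D) :
    Grpd.of C ⟶ Grpd.of D := F

/-- The chaotic (indiscrete) groupoid on a type. -/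
def Chaotic (X : Type u) : Type u := X

instance (X : Type u) : Groupoid.{u} (Chaotic X) where
  Hom _ _ := PUnit
  id _ := ⟨⟩
  comp _ _ := ⟨⟩
  inv _ := ⟨⟩

instance (X : Type u) (a b : Chaotic X) : Subsingleton (a ⟶ b) :=
  inferInstanceAs (Subsingleton PUnit.{u+1})

/-- Any function into a type gives a functor into the chaotic groupoid. -/
def chaoticFunctor {C : Type u} [Category.{u} C] {X : Type u} (f : C → X) :
    C ⥤ Chaotic X where
  obj := f
  map _ := ⟨⟩
  map_id _ := rfl
  map_comp _ _ := rfl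

lemma chaotic_ext {C : Type u} [Category.{u} C] {X : Type u} {F G : C ⥤ Chaotic X}
    (h : ∀ c, F.obj c = G.obj c) : F = G :=
  CategoryTheory.Functor.ext h (fun _ _ _ => Subsingleton.elim _ _)

/-- **Cofibrancy of all objects and the pushout product of cofibrations in `Grpd`**:
(1) every groupoid is cofibrant: any functor out of an initial groupoid is injective
on objects; (2) given cofibrations `F : G ⟶ H` and `F′ : G′ ⟶ H′` (functors injective
on objects) and a pushout square exhibiting `P` as `(H × G′) ⊔_{G × G′} (G × H′)`, the
induced functor `q : P ⟶ H × H′` (characterized by `inl ≫ q = 𝟭H × F′` and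
`inr ≫ q = F × 𝟭H′`) is injective on objects, i.e. a cofibration. -/
theorem grpd_cofibrant_and_pushoutProduct :
    (∀ (G E : Grpd.{u, u}), Limits.IsInitial E → ∀ f : E ⟶ G, Function.Injective f.obj) ∧
    (∀ (G H G' H' : Grpd.{u, u}) (F : ↑G ⥤ ↑H) (F' : ↑G' ⥤ ↑H'),
      Function.Injective F.obj → Function.Injective F'.obj →
      ∀ (P : Grpd.{u, u})
        (inl : Grpd.of (↑H × ↑G') ⟶ P) (inr : Grpd.of (↑G × ↑H') ⟶ P),
        IsPushout (homOf (Functor.prod F (𝟭 ↑G'))) (homOf (Functor.prod (𝟭 ↑G) F'))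
          inl inr →
        ∀ q : P ⟶ Grpd.of (↑H × ↑H'),
          inl ≫ q = homOf (Functor.prod (𝟭 ↑H) F') →
          inr ≫ q = homOf (Functor.prod F (𝟭 ↑H')) →
          Function.Injective q.obj) := by
  constructor
  · -- every object is cofibrant: the initial groupoid is empty
    intro G E hE f
    have hempty : IsEmpty ↑E := by
      by_contra h
      rw [not_isEmpty_iff] at h
      obtain ⟨e⟩ := h
      let t1 : ↑E ⥤ Chaotic (ULift.{u} Bool) := (Functor.const ↑E).obj (ULift.up true)
      let t2 : ↑E ⥤ Chaotic (ULift.{u} Bool) := (Functor.const ↑E).obj (ULift.up false)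
      have h2 : homOf t1 = homOf t2 := hE.hom_ext _ _
      have h3 : (ULift.up true : Chaotic (ULift.{u} Bool)) = ULift.up false :=
        congrArg (fun (t : E ⟶ Grpd.of (Chaotic (ULift.{u} Bool))) => t.obj e) h2
      exact Bool.noConfusion (congrArg ULift.down h3)
    intro a b _
    exact hempty.elim a
  · intro G H G' H' F F' hF hF' P pinl pinr hpo q hql hqr
    -- the type-level pushout of object sets
    let rel : ((↑H × ↑G') ⊕ (↑G × ↑H')) → ((↑H × ↑G') ⊕ (↑G × ↑H')) → Prop :=
      fun x y => ∃ a a', x = Sum.inl (F.obj a, a') ∧ y = Sum.inr (a, F'.obj a')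
    let Q := Quot rel
    -- the comparison map `Q → H × H'`
    let φ : ((↑H × ↑G') ⊕ (↑G × ↑H')) → (↑H × ↑H') :=
      Sum.elim (fun p => (p.1, F'.obj p.2)) (fun p => (F.obj p.1, p.2))
    have hφ : ∀ x y, rel x y → φ x = φ y := by
      rintro x y ⟨a, a', rfl, rfl⟩; rfl
    let Φ : Q → (↑H × ↑H') := Quot.lift φ hφ
    have hΦinj : Function.Injective Φ := by
      intro x y
      induction x using Quot.ind with | _ x =>
      induction y using Quot.ind with | _ y =>
      rcases x with x | x <;> rcases y with y | y <;> intro h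
      · have h' : ((x.1 : ↑H), F'.obj x.2) = (y.1, F'.obj y.2) := h
        obtain ⟨h1, h2⟩ := Prod.ext_iff.mp h'
        have : x = y := Prod.ext h1 (hF' h2)
        rw [this]
      · -- x : H × G', y : G × H', with x.1 = F y.1 and F' x.2 = y.2
        have h' : ((x.1 : ↑H), F'.obj x.2) = (F.obj y.1, y.2) := h
        obtain ⟨h1, h2⟩ := Prod.ext_iff.mp h'
        have hr : rel (Sum.inl x) (Sum.inr y) := ⟨y.1, x.2, by
          rw [show x = (F.obj y.1, x.2) from Prod.ext h1 rfl], by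
          rw [show y = (y.1, F'.obj x.2) from Prod.ext rfl h2.symm]⟩
        exact Quot.sound hr
      · have h' : ((F.obj x.1 : ↑H), x.2) = (y.1, F'.obj y.2) := h
        obtain ⟨h1, h2⟩ := Prod.ext_iff.mp h'
        have hr : rel (Sum.inl y) (Sum.inr x) := ⟨x.1, y.2, by
          rw [show y = (F.obj x.1, y.2) from Prod.ext h1.symm rfl], by
          rw [show x = (x.1, F'.obj y.2) from Prod.ext rfl h2]⟩
        exact (Quot.sound hr).symm
      · have h' : ((F.obj x.1 : ↑H), x.2) = (F.obj y.1, y.2) := h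
        obtain ⟨h1, h2⟩ := Prod.ext_iff.mp h'
        have : x = y := Prod.ext (hF h1) h2
        rw [this]
    -- functors into the chaotic groupoid on `Q`
    let L₁ : Grpd.of (↑H × ↑G') ⟶ Grpd.of (Chaotic Q) :=
      homOf (chaoticFunctor (fun p => Quot.mk rel (Sum.inl p)))
    let L₂ : Grpd.of (↑G × ↑H') ⟶ Grpd.of (Chaotic Q) :=
      homOf (chaoticFunctor (fun p => Quot.mk rel (Sum.inr p)))
    have comm : homOf (Functor.prod F (𝟭 ↑G')) ≫ L₁ = homOf (Functor.prod (𝟭 ↑G) F') ≫ L₂ := by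
      apply chaotic_ext
      intro c
      exact Quot.sound ⟨c.1, c.2, rfl, rfl⟩
    let ψ : P ⟶ Grpd.of (Chaotic Q) := hpo.desc L₁ L₂ comm
    have hψl : pinl ≫ ψ = L₁ := hpo.inl_desc L₁ L₂ comm
    have hψr : pinr ≫ ψ = L₂ := hpo.inr_desc L₁ L₂ comm
    -- the retraction `θ : Q → P`
    have hθsound : ∀ x y, rel x y →
        Sum.elim (fun p => pinl.obj p) (fun p => pinr.obj p) x
          = Sum.elim (fun p => pinl.obj p) (fun p => pinr.obj p) y := by
      rintro x y ⟨a, a', rfl, rfl⟩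
      exact congrArg (fun (t : Grpd.of (↑G × ↑G') ⟶ P) => t.obj (a, a')) hpo.w
    let θ : Q → ↑P :=
      Quot.lift (Sum.elim (fun p => pinl.obj p) (fun p => pinr.obj p)) hθsound
    -- θ ∘ ψ = id, via uniqueness of maps out of the pushout
    have hθψ : ψ ≫ homOf (chaoticFunctor (C := Chaotic Q) θ)
        = homOf (chaoticFunctor (C := ↑P) (id : ↑P → ↑P)) := by
      apply hpo.hom_ext
      · rw [← Category.assoc, hψl]; apply chaotic_ext; intro c; rfl
      · rw [← Category.assoc, hψr]; apply chaotic_ext; intro c; rfl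
    have hθψ' : ∀ x : ↑P, θ (ψ.obj x) = x := fun x =>
      congrArg (fun (t : P ⟶ Grpd.of (Chaotic ↑P)) => t.obj x) hθψ
    -- Φ ∘ ψ = q on objects
    have hΦψ : ψ ≫ homOf (chaoticFunctor (C := Chaotic Q) Φ)
        = q ≫ homOf (chaoticFunctor (C := ↑H × ↑H') (id : (↑H × ↑H') → (↑H × ↑H'))) := by
      apply hpo.hom_ext
      · rw [← Category.assoc, hψl, ← Category.assoc, hql]
        apply chaotic_ext; intro c; rfl
      · rw [← Category.assoc, hψr, ← Category.assoc, hqr]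
        apply chaotic_ext; intro c; rfl
    have hΦψ' : ∀ x : ↑P, Φ (ψ.obj x) = q.obj x := fun x =>
      congrArg (fun (t : P ⟶ Grpd.of (Chaotic (↑H × ↑H'))) => t.obj x) hΦψ
    -- conclude
    intro x y hxy
    have : Φ (ψ.obj x) = Φ (ψ.obj y) := by rw [hΦψ', hΦψ', hxy]
    have := hΦinj this
    calc x = θ (ψ.obj x) := (hθψ' x).symm
      _ = θ (ψ.obj y) := by rw [this]
      _ = y := hθψ' y

end Stmt3
end

section
/- If f₂ : Y → Z is an isofibration of groupoids, then the canonical functor from the strict fiber product X ×_Z Y (objects: pairs (x,y) with f₁(x) = f₂(y)) to the homotopy fiber product (iso-comma groupoid, objects: triples (x, y, k : f₁(x) → f₂(y))) given by (x,y) ↦ (x, y, id) is an equivalence of groupoids. -/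
/-!
STATEMENT 14: If `f₂ : Y ⥤ Z` is an isofibration of groupoids, then the canonical
functor from the strict fiber product `X ×_Z Y` (objects: pairs `(x,y)` with
`f₁(x) = f₂(y)`) to the homotopy fiber product (the iso-comma groupoid, objects:
triples `(x, y, k : f₁x ⟶ f₂y)`), given by `(x,y) ↦ (x, y, id)`, is an
equivalence of groupoids.
-/

open CategoryTheory

universe u₁ v₁ u₂ v₂ u₃ v₃

namespace Stmt14

/-- An isofibration: every (iso)morphism in the base with prescribed lift of its
source admits a lift. -/
def IsIsofibration {Y : Type u₂} {Z : Type u₃} [Category.{v₂} Y] [Category.{v₃} Z]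
    (F : Y ⥤ Z) : Prop :=
  ∀ (y : Y) (z : Z) (h : F.obj y ⟶ z),
    ∃ (y' : Y) (g : y ⟶ y') (e : F.obj y' = z), F.map g ≫ eqToHom e = h

variable {X : Type u₁} {Y : Type u₂} {Z : Type u₃}
  [Groupoid.{v₁} X] [Groupoid.{v₂} Y] [Groupoid.{v₃} Z]

/-- The strict fiber product of `f₁ : X ⥤ Z` and `f₂ : Y ⥤ Z`: pairs of objects
with equal images. -/
structure StrictFiber (f₁ : X ⥤ Z) (f₂ : Y ⥤ Z) where
  /-- first component -/
  x : X
  /-- second component -/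
  y : Y
  /-- strict compatibility -/
  w : f₁.obj x = f₂.obj y

instance (f₁ : X ⥤ Z) (f₂ : Y ⥤ Z) : Category (StrictFiber f₁ f₂) where
  Hom a b := {p : (a.x ⟶ b.x) × (a.y ⟶ b.y) //
    f₁.map p.1 ≫ eqToHom b.w = eqToHom a.w ≫ f₂.map p.2}
  id a := ⟨(𝟙 a.x, 𝟙 a.y), by simp⟩
  comp {a b c} f g := ⟨(f.1.1 ≫ g.1.1, f.1.2 ≫ g.1.2), by
    simp only [Functor.map_comp, Category.assoc, g.2]
    rw [← Category.assoc, f.2, Category.assoc]⟩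
  id_comp f := by apply Subtype.ext; dsimp; simp
  comp_id f := by apply Subtype.ext; dsimp; simp
  assoc f g h := by apply Subtype.ext; dsimp; simp

/-- The canonical comparison functor from the strict fiber product to the
homotopy fiber product (comma groupoid), `(x, y) ↦ (x, y, id)`. -/
def toComma (f₁ : X ⥤ Z) (f₂ : Y ⥤ Z) : StrictFiber f₁ f₂ ⥤ Comma f₁ f₂ where
  obj a := ⟨a.x, a.y, eqToHom a.w⟩
  map f := ⟨f.1.1, f.1.2, f.2⟩
  map_id := by intro a; rfl
  map_comp := by intro a b c f g; rfl

/-- **Strict fiber products compute homotopy fiber products along isofibrations**: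
if `f₂` is an isofibration of groupoids, the canonical functor from the strict
fiber product to the iso-comma groupoid is an equivalence. -/
theorem strictFiber_equiv_comma (f₁ : X ⥤ Z) (f₂ : Y ⥤ Z)
    (hfib : IsIsofibration f₂) : (toComma f₁ f₂).IsEquivalence := by
  constructor
  · constructor
    intro a b u v h
    apply Subtype.ext
    have h1 : u.1.1 = v.1.1 := congrArg CommaMorphism.left h
    have h2 : u.1.2 = v.1.2 := congrArg CommaMorphism.right h
    exact Prod.ext h1 h2
  · constructor
    intro a b u
    exact ⟨⟨(u.left, u.right), u.w⟩, rfl⟩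
  · constructor
    intro c
    obtain ⟨x, y, k⟩ := c
    obtain ⟨y', g, e, hg⟩ := hfib y (f₁.obj x) (Groupoid.inv k)
    refine ⟨⟨x, y', e.symm⟩, ⟨?_⟩⟩
    have hg' : f₂.map g = Groupoid.inv k ≫ eqToHom e.symm := by
      rw [← hg]; simp
    have hinv : f₂.map (Groupoid.inv g) = eqToHom e ≫ k := by
      rw [← cancel_epi (f₂.map g), ← f₂.map_comp, Groupoid.comp_inv, hg']
      simp
    refine ⟨⟨𝟙 x, Groupoid.inv g, ?_⟩, ⟨𝟙 x, g, ?_⟩, ?_, ?_⟩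
    · simp [toComma, hg']
    · simp [toComma, hg']
    · apply CommaMorphism.ext <;> simp [toComma]
    · apply CommaMorphism.ext <;> simp [toComma]

end Stmt14
end
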